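/- Let $d \geq 2$, $0 < s < d$, $\alpha = d - s$, and define $G(z) = z^{s/2}\left({}_2F_1\left(\frac{s}{2},\frac{d}{2},1+\frac{s}{2},-z\right) - (1+z)^{-d/2}\right)$ for $z \geq 0$. Then $G$ admits the integral representation $G(z) = \frac{\Gamma(1+s/2)}{\Gamma(d/2)\Gamma(1-\alpha/2)} \int_0^1 x^{d/2}(1-x)^{-\alpha/2}(x+1/z)^{-s/2-1}\,dx$ for $z > 0$, and $G$ is non-decreasing on $[0,\infty)$ with $\lim_{z\to 0^+} G(z) = 0$ and $\lim_{z\to\infty} G(z) = \frac{\Gamma(\alpha/2)\Gamma(1+s/2)}{\Gamma(d/2)}$. -/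

import Mathlib

/-!
With `b = d/2` and `p = s/2`, the subtracted term `(1+z)^(-b)` is itself the Euler integral
`₂F₁(1+p, b; 1+p; -z)`: the substitution `t = (1-z)x/(1-zx)` turns `₂F₁(a, b; a; z)` into a Beta
integral. Hence `G` is a single Euler integral, and its integrand
`z^p x^(b-1) (1-x)^(p-b) ((1+zx)^(-p) - (1+zx)^(-p-1))` collapses to
`x^b (1-x)^(p-b) (x+1/z)^(-p-1)`.
This kernel increases with `z`, is at most `z^(p+1) x^b (1-x)^(p-b)`, and tends to the Beta density
`x^(b-p-1) (1-x)^(p-b)` as `z → ∞`; dominated convergence and `B(b-p, 1+p-b)` give the limits.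
-/

open Real Filter MeasureTheory Set Topology

/-- Gauss hypergeometric function `₂F₁(a,b;c;z)` via the Euler integral representation. -/
noncomputable def twoF1 (a b c z : ℝ) : ℝ :=
  (Real.Gamma c / (Real.Gamma b * Real.Gamma (c - b))) *
    ∫ x in Set.Ioo (0 : ℝ) 1, x ^ (b - 1) * (1 - x) ^ (c - b - 1) * (1 - z * x) ^ (-a)

lemma integrableOn_rpow_mul_one_sub_rpow {u v : ℝ} (hu : -1 < u) (hv : -1 < v) :
    IntegrableOn (fun x : ℝ => x ^ u * (1 - x) ^ v) (Ioo 0 1) := by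
  have h := (Complex.betaIntegral_convergent (u := u + 1) (v := v + 1)
    (by simp; linarith) (by simp; linarith)).norm
  rw [intervalIntegrable_iff_integrableOn_Ioo_of_le zero_le_one] at h
  refine h.congr_fun (fun x hx => ?_) measurableSet_Ioo
  have h1x : (1 : ℂ) - x = ((1 - x : ℝ) : ℂ) := by push_cast; ring
  simp only [norm_mul, add_sub_cancel_right, h1x]
  rw [Complex.norm_cpow_eq_rpow_re_of_pos hx.1,
    Complex.norm_cpow_eq_rpow_re_of_pos (sub_pos.2 hx.2)]
  simp

lemma integrableOn_rpow_mul_one_sub_rpow_mul {u v : ℝ} {k : ℝ → ℝ} (hu : -1 < u) (hv : -1 < v)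
    (hk : ContinuousOn k (Icc 0 1)) :
    IntegrableOn (fun x : ℝ => x ^ u * (1 - x) ^ v * k x) (Ioo 0 1) :=
  (integrableOn_rpow_mul_one_sub_rpow hu hv).mul_continuousOn_of_subset hk measurableSet_Ioo
    isCompact_Icc Ioo_subset_Icc_self

lemma integral_rpow_mul_one_sub_rpow {u v : ℝ} (hu : 0 < u) (hv : 0 < v) :
    ∫ x in Ioo (0 : ℝ) 1, x ^ (u - 1) * (1 - x) ^ (v - 1) = ProbabilityTheory.beta u v := by
  rw [ProbabilityTheory.beta_eq_betaIntegralReal u v hu hv, Complex.betaIntegral,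
    intervalIntegral.integral_of_le zero_le_one, ← integral_Ioc_eq_integral_Ioo,
    ← RCLike.re_to_complex, ← integral_re]
  · refine setIntegral_congr_fun measurableSet_Ioc fun x ⟨hx0, hx1⟩ ↦ ?_
    norm_cast
    rw [← Complex.ofReal_cpow, ← Complex.ofReal_cpow, RCLike.re_to_complex,
      Complex.re_mul_ofReal, Complex.ofReal_re]
    all_goals linarith
  · exact (intervalIntegrable_iff_integrableOn_Ioc_of_le zero_le_one).1
      (Complex.betaIntegral_convergent (by simpa) (by simpa))

lemma bijOn_mobius_Ioo {z : ℝ} (hz : z < 1) :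
    BijOn (fun x : ℝ => (1 - z) * x / (1 - z * x)) (Ioo 0 1) (Ioo 0 1) := by
  have hq : 1 - z ≠ 0 := by linarith
  have hpos : ∀ x ∈ Ioo (0 : ℝ) 1, 0 < 1 - z * x := fun x ⟨hx0, hx1⟩ => by nlinarith
  have hpos' : ∀ t ∈ Ioo (0 : ℝ) 1, 0 < 1 - z + z * t := fun t ⟨ht0, ht1⟩ => by nlinarith
  refine InvOn.bijOn (f' := fun t => t / (1 - z + z * t)) ⟨fun x hx => ?_, fun t ht => ?_⟩
    (fun x hx => ?_) (fun t ht => ?_)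
  · have := hpos x hx
    have : 1 - z + z * ((1 - z) * x / (1 - z * x)) = (1 - z) / (1 - z * x) := by
      field_simp; ring
    simp only [this]
    field_simp
  · have := hpos' t ht
    have : 1 - z * (t / (1 - z + z * t)) = (1 - z) / (1 - z + z * t) := by
      field_simp; ring
    simp only [this]
    field_simp
  · have := hpos x hx
    obtain ⟨hx0, hx1⟩ := hx
    constructor
    · have : 0 < 1 - z := by linarith
      positivity
    · rw [div_lt_one (by assumption)]; nlinarith
  · have := hpos' t ht
    obtain ⟨ht0, ht1⟩ := ht
    exact ⟨by positivity, by rw [div_lt_one (by assumption)]; nlinarith⟩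

theorem twoF1_self {a b z : ℝ} (hb : 0 < b) (hba : b < a) (hz : z < 1) :
    twoF1 a b a z = (1 - z) ^ (-b) := by
  have hq : 0 < 1 - z := by linarith
  have hbij := bijOn_mobius_Ioo hz
  have hderiv : ∀ x ∈ Ioo (0 : ℝ) 1, HasDerivWithinAt (fun x : ℝ => (1 - z) * x / (1 - z * x))
      ((1 - z) / (1 - z * x) ^ 2) (Ioo 0 1) x := by
    intro x ⟨hx0, hx1⟩
    have hm : 1 - z * x ≠ 0 := by nlinarith
    have := ((hasDerivAt_id x).const_mul (1 - z)).div
      (((hasDerivAt_id x).const_mul z).const_sub 1) hm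
    exact (this.congr_deriv (by simp only [id]; field_simp; ring)).hasDerivWithinAt
  have hcov := integral_image_eq_integral_abs_deriv_smul measurableSet_Ioo hderiv hbij.injOn
    (fun t => t ^ (b - 1) * (1 - t) ^ (a - b - 1))
  rw [hbij.image_eq, integral_rpow_mul_one_sub_rpow hb (by linarith : 0 < a - b)] at hcov
  have hpt : ∀ x ∈ Ioo (0 : ℝ) 1,
      |(1 - z) / (1 - z * x) ^ 2| • (((1 - z) * x / (1 - z * x)) ^ (b - 1) *
        (1 - (1 - z) * x / (1 - z * x)) ^ (a - b - 1))
      = (1 - z) ^ b * (x ^ (b - 1) * (1 - x) ^ (a - b - 1) * (1 - z * x) ^ (-a)) := by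
    intro x ⟨hx0, hx1⟩
    have hm : 0 < 1 - z * x := by nlinarith
    have h1x : 0 < 1 - x := by linarith
    have : 1 - (1 - z) * x / (1 - z * x) = (1 - x) / (1 - z * x) := by field_simp; ring
    rw [this, smul_eq_mul, abs_of_pos (by positivity)]
    refine Real.log_injOn_pos (mem_Ioi.2 (by positivity)) (mem_Ioi.2 (by positivity)) ?_
    simp (disch := positivity) only [Real.log_mul, Real.log_div, Real.log_rpow, Real.log_pow]
    push_cast
    ring
  rw [setIntegral_congr_fun measurableSet_Ioo hpt, integral_const_mul] at hcov
  rw [ProbabilityTheory.beta, add_sub_cancel] at hcov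
  have := Real.Gamma_pos_of_pos hb
  have := Real.Gamma_pos_of_pos (by linarith : 0 < a - b)
  have := Real.Gamma_pos_of_pos (by linarith : 0 < a)
  have := Real.rpow_pos_of_pos hq b
  rw [twoF1, Real.rpow_neg hq.le]
  set I := ∫ x in Ioo (0 : ℝ) 1, x ^ (b - 1) * (1 - x) ^ (a - b - 1) * (1 - z * x) ^ (-a)
  field_simp at hcov ⊢
  linear_combination -hcov

noncomputable def twoF1Gap (b p z : ℝ) : ℝ :=
  z ^ p * (twoF1 p b (1 + p) (-z) - (1 + z) ^ (-b))

noncomputable def twoF1GapIntegral (b p z : ℝ) : ℝ :=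
  ∫ x in Ioo (0 : ℝ) 1, x ^ b * (1 - x) ^ (p - b) * (x + 1 / z) ^ (-p - 1)

section

variable {b p : ℝ}

lemma twoF1Gap_integrand_eq {x z : ℝ} (hx : x ∈ Ioo (0 : ℝ) 1) (hz : 0 < z) :
    z ^ p * (x ^ (b - 1) * (1 - x) ^ (1 + p - b - 1) * (1 - -z * x) ^ (-p) -
        x ^ (b - 1) * (1 - x) ^ (1 + p - b - 1) * (1 - -z * x) ^ (-(1 + p)))
      = x ^ b * (1 - x) ^ (p - b) * (x + 1 / z) ^ (-p - 1) := by
  obtain ⟨hx0, hx1⟩ := hx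
  have h1x : 0 < 1 - x := by linarith
  have hu : 0 < 1 - -z * x := by nlinarith
  have hsplit : (1 - -z * x) ^ (-p) = (1 - -z * x) ^ (-(1 + p)) * (1 - -z * x) := by
    rw [← Real.rpow_add_one hu.ne']
    ring_nf
  calc _ = z ^ p * z * x ^ (b - 1) * x * (1 - x) ^ (p - b) * (1 - -z * x) ^ (-(1 + p)) := by
        rw [hsplit]; ring_nf
    _ = _ := by
      refine Real.log_injOn_pos (mem_Ioi.2 (by positivity)) (mem_Ioi.2 (by positivity)) ?_
      have : x + 1 / z = (1 - -z * x) / z := by field_simp; ring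
      rw [this]
      simp (disch := positivity) only [Real.log_mul, Real.log_div, Real.log_rpow]
      ring

lemma integrableOn_twoF1_integrand {z r : ℝ} (hb : 0 < b) (hbp : b < 1 + p) (hz : 0 ≤ z) :
    IntegrableOn (fun x : ℝ => x ^ (b - 1) * (1 - x) ^ (1 + p - b - 1) * (1 - -z * x) ^ r)
      (Ioo 0 1) := by
  refine integrableOn_rpow_mul_one_sub_rpow_mul (by linarith) (by linarith) ?_
  exact (by fun_prop : Continuous fun x : ℝ => 1 - -z * x).continuousOn.rpow_const
    fun x hx => Or.inl (by nlinarith [hx.1])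

lemma integrableOn_twoF1GapIntegral_integrand {z : ℝ} (hb : 0 < b) (hbp : b < 1 + p) (hz : 0 < z) :
    IntegrableOn (fun x : ℝ => x ^ b * (1 - x) ^ (p - b) * (x + 1 / z) ^ (-p - 1)) (Ioo 0 1) := by
  refine integrableOn_rpow_mul_one_sub_rpow_mul (by linarith) (by linarith) ?_
  exact (by fun_prop : Continuous fun x : ℝ => x + 1 / z).continuousOn.rpow_const
    fun x hx => Or.inl (by have := hx.1; positivity)

theorem twoF1Gap_eq_mul_twoF1GapIntegral {z : ℝ} (hb : 0 < b) (hbp : b < 1 + p) (hz : 0 < z) :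
    twoF1Gap b p z = Gamma (1 + p) / (Gamma b * Gamma (1 + p - b)) * twoF1GapIntegral b p z := by
  rw [twoF1Gap, ← sub_neg_eq_add 1 z, ← twoF1_self hb hbp (by linarith : -z < 1), twoF1, twoF1,
    ← mul_sub, ← integral_sub (integrableOn_twoF1_integrand hb hbp hz.le)
      (integrableOn_twoF1_integrand hb hbp hz.le), mul_left_comm, ← integral_const_mul,
    twoF1GapIntegral]
  congr 1
  exact setIntegral_congr_fun measurableSet_Ioo fun x hx => twoF1Gap_integrand_eq hx hz

lemma twoF1GapIntegral_integrand_nonneg {x z : ℝ} (hx : x ∈ Ioo (0 : ℝ) 1) (hz : 0 < z) :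
    0 ≤ x ^ b * (1 - x) ^ (p - b) * (x + 1 / z) ^ (-p - 1) := by
  have := hx.1
  have := sub_pos.2 hx.2
  positivity

lemma twoF1GapIntegral_nonneg {z : ℝ} (hz : 0 < z) : 0 ≤ twoF1GapIntegral b p z :=
  setIntegral_nonneg measurableSet_Ioo fun _ hx => twoF1GapIntegral_integrand_nonneg hx hz

lemma monotoneOn_twoF1GapIntegral (hb : 0 < b) (hbp : b < 1 + p) :
    MonotoneOn (twoF1GapIntegral b p) (Ioi 0) := by
  intro z₁ (hz₁ : 0 < z₁) z₂ (hz₂ : 0 < z₂) hz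
  refine setIntegral_mono_on (integrableOn_twoF1GapIntegral_integrand hb hbp hz₁)
    (integrableOn_twoF1GapIntegral_integrand hb hbp hz₂) measurableSet_Ioo fun x hx => ?_
  have := hx.1
  have := sub_pos.2 hx.2
  have : 1 / z₂ ≤ 1 / z₁ := one_div_le_one_div_of_le hz₁ hz
  gcongr ?_ * ?_
  exact Real.rpow_le_rpow_of_nonpos (by positivity) (by linarith) (by linarith)

lemma twoF1GapIntegral_le {z : ℝ} (hb : 0 < b) (hbp : b < 1 + p) (hz : 0 < z) :
    twoF1GapIntegral b p z ≤ z ^ (p + 1) * ∫ x in Ioo (0 : ℝ) 1, x ^ b * (1 - x) ^ (p - b) := by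
  rw [← integral_const_mul]
  refine setIntegral_mono_on (integrableOn_twoF1GapIntegral_integrand hb hbp hz)
    ((integrableOn_rpow_mul_one_sub_rpow (by linarith) (by linarith)).const_mul _)
    measurableSet_Ioo fun x hx => ?_
  have := hx.1
  have := sub_pos.2 hx.2
  have hw : (x + 1 / z) ^ (-p - 1) ≤ z ^ (p + 1) := calc
    (x + 1 / z) ^ (-p - 1) ≤ (1 / z) ^ (-p - 1) :=
      Real.rpow_le_rpow_of_nonpos (by positivity) (by linarith) (by linarith)
    _ = z ^ (p + 1) := by
      rw [one_div, Real.inv_rpow hz.le, ← Real.rpow_neg hz.le, neg_sub', sub_neg_eq_add, neg_neg]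
  rw [mul_comm (z ^ (p + 1))]
  gcongr

lemma tendsto_twoF1GapIntegral_nhdsGT_zero (hb : 0 < b) (hbp : b < 1 + p) :
    Tendsto (twoF1GapIntegral b p) (𝓝[>] 0) (𝓝 0) := by
  have hlim : Tendsto (fun z : ℝ => z ^ (p + 1) * ∫ x in Ioo (0 : ℝ) 1, x ^ b * (1 - x) ^ (p - b))
      (𝓝 0) (𝓝 0) := by
    have := (Real.continuousAt_rpow_const 0 (p + 1) (Or.inr (by linarith))).tendsto.mul_const
      (∫ x in Ioo (0 : ℝ) 1, x ^ b * (1 - x) ^ (p - b))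
    rwa [Real.zero_rpow (by linarith), zero_mul] at this
  refine tendsto_of_tendsto_of_tendsto_of_le_of_le' tendsto_const_nhds
    (hlim.mono_left nhdsWithin_le_nhds) ?_ ?_
  · filter_upwards [self_mem_nhdsWithin] with z hz using twoF1GapIntegral_nonneg hz
  · filter_upwards [self_mem_nhdsWithin] with z hz using twoF1GapIntegral_le hb hbp hz

lemma tendsto_twoF1GapIntegral_atTop (hb : 0 < b) (hpb : p < b) (hbp : b < 1 + p) :
    Tendsto (twoF1GapIntegral b p) atTop (𝓝 (ProbabilityTheory.beta (b - p) (1 + p - b))) := by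
  have hbound : ∀ x ∈ Ioo (0 : ℝ) 1, x ^ b * (1 - x) ^ (p - b) * x ^ (-p - 1)
      = x ^ (b - p - 1) * (1 - x) ^ (1 + p - b - 1) := fun x hx => by
    rw [mul_right_comm, ← Real.rpow_add hx.1]
    ring_nf
  rw [← integral_rpow_mul_one_sub_rpow (by linarith) (by linarith),
    ← setIntegral_congr_fun measurableSet_Ioo hbound]
  refine tendsto_integral_filter_of_dominated_convergence
    (fun x => x ^ b * (1 - x) ^ (p - b) * x ^ (-p - 1)) ?_ ?_ ?_ ?_
  · filter_upwards [eventually_gt_atTop 0] with z hz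
    exact (integrableOn_twoF1GapIntegral_integrand hb hbp hz).aestronglyMeasurable
  · filter_upwards [eventually_gt_atTop 0] with z hz
    refine (ae_restrict_iff' measurableSet_Ioo).2 (Eventually.of_forall fun x hx => ?_)
    have := hx.1
    have := sub_pos.2 hx.2
    rw [Real.norm_of_nonneg (twoF1GapIntegral_integrand_nonneg hx hz)]
    gcongr ?_ * ?_
    exact Real.rpow_le_rpow_of_nonpos (by positivity) (by simp; positivity) (by linarith)
  · refine (integrableOn_rpow_mul_one_sub_rpow (by linarith) (by linarith)).congr_fun
      (fun x hx => (hbound x hx).symm) measurableSet_Ioo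
  · refine (ae_restrict_iff' measurableSet_Ioo).2 (Eventually.of_forall fun x hx => ?_)
    have hbase : Tendsto (fun z : ℝ => x + 1 / z) atTop (𝓝 x) := by
      simpa [one_div] using (tendsto_inv_atTop_zero (𝕜 := ℝ)).const_add x
    exact ((Real.continuousAt_rpow_const x _ (Or.inl hx.1.ne')).tendsto.comp hbase).const_mul _

lemma gamma_div_gamma_mul_gamma_pos (hb : 0 < b) (hbp : b < 1 + p) :
    0 < Gamma (1 + p) / (Gamma b * Gamma (1 + p - b)) := by
  have := Gamma_pos_of_pos hb
  have := Gamma_pos_of_pos (by linarith : 0 < 1 + p)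
  have := Gamma_pos_of_pos (by linarith : 0 < 1 + p - b)
  positivity

lemma twoF1Gap_zero (hp : p ≠ 0) : twoF1Gap b p 0 = 0 := by
  rw [twoF1Gap, Real.zero_rpow hp, zero_mul]

lemma twoF1Gap_nonneg {z : ℝ} (hb : 0 < b) (hbp : b < 1 + p) (hp : p ≠ 0) (hz : 0 ≤ z) :
    0 ≤ twoF1Gap b p z := by
  rcases hz.eq_or_lt with rfl | hz
  · exact (twoF1Gap_zero hp).ge
  · rw [twoF1Gap_eq_mul_twoF1GapIntegral hb hbp hz]
    exact mul_nonneg (gamma_div_gamma_mul_gamma_pos hb hbp).le (twoF1GapIntegral_nonneg hz)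

theorem monotoneOn_twoF1Gap (hb : 0 < b) (hbp : b < 1 + p) (hp : p ≠ 0) :
    MonotoneOn (twoF1Gap b p) (Ici 0) := by
  intro z₁ (hz₁ : 0 ≤ z₁) z₂ (hz₂ : 0 ≤ z₂) hz
  rcases hz₁.eq_or_lt with rfl | hz₁
  · rw [twoF1Gap_zero hp]
    exact twoF1Gap_nonneg hb hbp hp hz₂
  rw [twoF1Gap_eq_mul_twoF1GapIntegral hb hbp hz₁,
    twoF1Gap_eq_mul_twoF1GapIntegral hb hbp (hz₁.trans_le hz)]
  exact mul_le_mul_of_nonneg_left (monotoneOn_twoF1GapIntegral hb hbp hz₁ (hz₁.trans_le hz) hz)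
    (gamma_div_gamma_mul_gamma_pos hb hbp).le

theorem tendsto_twoF1Gap_nhdsGT_zero (hb : 0 < b) (hbp : b < 1 + p) :
    Tendsto (twoF1Gap b p) (𝓝[>] 0) (𝓝 0) := by
  have := (tendsto_twoF1GapIntegral_nhdsGT_zero hb hbp).const_mul
    (Gamma (1 + p) / (Gamma b * Gamma (1 + p - b)))
  rw [mul_zero] at this
  refine this.congr' ?_
  filter_upwards [self_mem_nhdsWithin] with z hz
  exact (twoF1Gap_eq_mul_twoF1GapIntegral hb hbp hz).symm

theorem tendsto_twoF1Gap_atTop (hb : 0 < b) (hpb : p < b) (hbp : b < 1 + p) :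
    Tendsto (twoF1Gap b p) atTop (𝓝 (Gamma (b - p) * Gamma (1 + p) / Gamma b)) := by
  have hlim := (tendsto_twoF1GapIntegral_atTop hb hpb hbp).const_mul
    (Gamma (1 + p) / (Gamma b * Gamma (1 + p - b)))
  have hval : Gamma (1 + p) / (Gamma b * Gamma (1 + p - b)) *
      ProbabilityTheory.beta (b - p) (1 + p - b) = Gamma (b - p) * Gamma (1 + p) / Gamma b := by
    have := Gamma_pos_of_pos hb
    have := Gamma_pos_of_pos (by linarith : 0 < 1 + p - b)
    rw [ProbabilityTheory.beta, show b - p + (1 + p - b) = 1 by ring, Gamma_one]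
    field_simp
  rw [hval] at hlim
  refine hlim.congr' ?_
  filter_upwards [eventually_gt_atTop 0] with z hz
  exact (twoF1Gap_eq_mul_twoF1GapIntegral hb hbp hz).symm

end

theorem stmt9_general (d : ℕ) (s : ℝ) (hs : 0 < s) (hsd : s < (d : ℝ))
    (hs2 : (d : ℝ) - 2 < s) (α : ℝ) (hα : α = (d : ℝ) - s)
    (G : ℝ → ℝ)
    (hG : ∀ z : ℝ, G z =
      z ^ (s / 2) * (twoF1 (s / 2) ((d : ℝ) / 2) (1 + s / 2) (-z) - (1 + z) ^ (-(d : ℝ) / 2))) :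
    (∀ z : ℝ, 0 < z → G z =
        Real.Gamma (1 + s / 2) / (Real.Gamma ((d : ℝ) / 2) * Real.Gamma (1 - α / 2)) *
          ∫ x in Set.Ioo (0 : ℝ) 1,
            x ^ ((d : ℝ) / 2) * (1 - x) ^ (-α / 2) * (x + 1 / z) ^ (-s / 2 - 1)) ∧
      MonotoneOn G (Set.Ici 0) ∧
      Tendsto G (nhdsWithin 0 (Set.Ioi 0)) (nhds 0) ∧
      Tendsto G atTop
        (nhds (Real.Gamma (α / 2) * Real.Gamma (1 + s / 2) / Real.Gamma ((d : ℝ) / 2))) := by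
  have hb : 0 < (d : ℝ) / 2 := by linarith
  have hbp : (d : ℝ) / 2 < 1 + s / 2 := by linarith
  obtain rfl : G = twoF1Gap ((d : ℝ) / 2) (s / 2) := funext fun z => by rw [hG, twoF1Gap, neg_div]
  subst hα
  refine ⟨fun z hz => ?_, monotoneOn_twoF1Gap hb hbp (by positivity),
    tendsto_twoF1Gap_nhdsGT_zero hb hbp, ?_⟩
  · rw [twoF1Gap_eq_mul_twoF1GapIntegral hb hbp hz, twoF1GapIntegral,
      show 1 - ((d : ℝ) - s) / 2 = 1 + s / 2 - d / 2 by ring,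
      show -((d : ℝ) - s) / 2 = s / 2 - d / 2 by ring, show -s / 2 - 1 = -(s / 2) - 1 by ring]
  · convert tendsto_twoF1Gap_atTop hb (by linarith) hbp using 5
    ring

theorem stmt9 (d : ℕ) (hd : 2 ≤ d) (s : ℝ) (hs : 0 < s) (hsd : s < (d : ℝ))
    (hs2 : (d : ℝ) - 2 < s) (α : ℝ) (hα : α = (d : ℝ) - s)
    (G : ℝ → ℝ)
    (hG : ∀ z : ℝ, G z =
      z ^ (s / 2) * (twoF1 (s / 2) ((d : ℝ) / 2) (1 + s / 2) (-z) - (1 + z) ^ (-(d : ℝ) / 2))) :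
    (∀ z : ℝ, 0 < z → G z =
        Real.Gamma (1 + s / 2) / (Real.Gamma ((d : ℝ) / 2) * Real.Gamma (1 - α / 2)) *
          ∫ x in Set.Ioo (0 : ℝ) 1,
            x ^ ((d : ℝ) / 2) * (1 - x) ^ (-α / 2) * (x + 1 / z) ^ (-s / 2 - 1)) ∧
      MonotoneOn G (Set.Ici 0) ∧
      Tendsto G (nhdsWithin 0 (Set.Ioi 0)) (nhds 0) ∧
      Tendsto G atTop
        (nhds (Real.Gamma (α / 2) * Real.Gamma (1 + s / 2) / Real.Gamma ((d : ℝ) / 2))) :=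
  stmt9_general d s hs hsd hs2 α hα G hG
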